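/- Moll's minimum conjecture: for every integer m ≥ 2, the sequence {i(i+1)(d_i(m)² − d_{i+1}(m) d_{i-1}(m))}_{1 ≤ i ≤ m} attains its minimum at i = m, with minimum value 2^{-2m} m(m+1) C(2m,m)². That is, for all 1 ≤ i ≤ m−1, i(i+1)(d_i(m)² − d_{i+1}(m)d_{i-1}(m)) > m(m+1) d_m(m)² = 2^{-2m} m(m+1) C(2m,m)². -/

import Mathlib

noncomputable def d (m i : ℕ) : ℚ :=
  (2:ℚ)^(-(2*(m:ℤ))) * ∑ k ∈ Finset.Icc i m,
    (2:ℚ)^k * (Nat.choose (2*m-2*k) (m-k)) * (Nat.choose (m+k) k) * (Nat.choose k i)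

/-!
The sequence `d m i` satisfies the three-term recurrence
`i (i+1) d_{i+1} + (m+i)(m+1-i) d_{i-1} = i (2m+1) d_i`, obtained by telescoping its defining sum
against a Gosper certificate. Termwise, `(m-i) d_i ≥ (i+1) d_{i+1}`; eliminating `d_{i-1}` through
the recurrence factors `i d_i² - (i+1) d_{i+1} d_{i-1}` into a product of two terms that are
nonnegative by this inequality. Hence `i (i+1) (d_i² - d_{i+1} d_{i-1}) ≥ i d_i² ≥ d_i²`, and
the last two terms of the sum for `d_i` give `2 d_i ≥ (2m+1) d_m`, so that
`d_i² ≥ (2m+1)² d_m² / 4 > m (m+1) d_m²`.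
-/

open Finset

theorem Nat.le_choose_of_pos_of_lt {n k : ℕ} (hk : 0 < k) (hkn : k < n) : n ≤ n.choose k := by
  obtain ⟨n, rfl⟩ : ∃ n', n = n' + 1 := ⟨n - 1, by omega⟩
  obtain ⟨k, rfl⟩ : ∃ k', k = k' + 1 := ⟨k - 1, by omega⟩
  have hk : k + 1 ≤ n.choose k :=
    (Nat.choose_succ_self_right k).symm.le.trans (Nat.choose_le_choose k (by omega))
  refine Nat.le_of_mul_le_mul_right ?_ (Nat.succ_pos k)
  rw [← Nat.add_one_mul_choose_eq]
  exact Nat.mul_le_mul_left _ hk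

theorem Nat.cast_choose_succ_mul {R : Type*} [CommRing R] (n k : ℕ) :
    (n.choose (k + 1) : R) * (k + 1) = n.choose k * (n - k) := by
  rcases le_or_gt k n with hkn | hnk
  · have h := congrArg (Nat.cast : ℕ → R) (Nat.choose_succ_right_eq n k)
    push_cast [Nat.cast_sub hkn] at h
    exact h
  · simp [Nat.choose_eq_zero_of_lt hnk, Nat.choose_eq_zero_of_lt (hnk.trans k.lt_succ_self)]

theorem Nat.cast_choose_three_term {R : Type*} [CommRing R] (n p : ℕ) :
    ((p + 1) * (p + 2) * n.choose (p + 2) + (n + p + 1) * (n - p) * n.choose p : R)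
      = 2 * n * (p + 1) * n.choose (p + 1) := by
  have h₀ := Nat.cast_choose_succ_mul (R := R) n p
  have h₁ := Nat.cast_choose_succ_mul (R := R) n (p + 1)
  push_cast at h₁
  linear_combination (p + 1 : R) * h₁ - (n + p + 1 : R) * h₀

namespace Moll

def weight (m k : ℕ) : ℚ :=
  2 ^ k * ((2 * m - 2 * k).choose (m - k) : ℚ) * ((m + k).choose k : ℚ)

lemma weight_nonneg (m k : ℕ) : 0 ≤ weight m k := by
  unfold weight; positivity

lemma weight_succ {m k : ℕ} (hk : k < m) :
    (2 * m - 2 * k - 1) * (k + 1) * weight m (k + 1) = (m - k) * (m + k + 1) * weight m k := by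
  obtain ⟨j, rfl⟩ : ∃ j, m = k + j + 1 := ⟨m - k - 1, by omega⟩
  have hc := congrArg (Nat.cast : ℕ → ℚ) (Nat.succ_mul_centralBinom_succ j)
  have hb := congrArg (Nat.cast : ℕ → ℚ) (Nat.add_one_mul_choose_eq (k + j + 1 + k) k)
  simp only [Nat.centralBinom_eq_two_mul_choose] at hc
  unfold weight
  rw [show 2 * (k + j + 1) - 2 * (k + 1) = 2 * j by omega, show k + j + 1 - (k + 1) = j by omega,
    show 2 * (k + j + 1) - 2 * k = 2 * (j + 1) by omega, show k + j + 1 - k = j + 1 by omega,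
    show k + j + 1 + (k + 1) = k + j + 1 + k + 1 by omega]
  push_cast at hc hb ⊢
  linear_combination -(2 : ℚ) ^ k * (j + 1) * ((2 * (j + 1)).choose (j + 1) : ℚ) * hb
    - (2 : ℚ) ^ k * (k + 1) * ((k + j + 1 + k + 1).choose (k + 1) : ℚ) * hc

lemma d_eq_sum_range (m i : ℕ) :
    d m i = (2 : ℚ) ^ (-(2 * (m : ℤ))) * ∑ k ∈ range (m + 1), weight m k * k.choose i := by
  rw [d]
  congr 1
  refine sum_subset (fun k hk => mem_range.2 (by simp at hk; omega)) fun k hkm hk => ?_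
  rw [Nat.choose_eq_zero_of_lt (show k < i by simp at hk hkm; omega)]
  simp

lemma d_self (m : ℕ) : d m m = (2 : ℚ) ^ (-(2 * (m : ℤ))) * weight m m := by
  simp [d, weight]

lemma weight_self (m : ℕ) : weight m m = 2 ^ m * (2 * m).choose m := by
  simp [weight, two_mul]

lemma d_nonneg (m i : ℕ) : 0 ≤ d m i := by
  rw [d_eq_sum_range]
  exact mul_nonneg (by positivity)
    (sum_nonneg fun k _ => mul_nonneg (weight_nonneg m k) (by positivity))

lemma d_recurrence (m p : ℕ) :
    (p + 1) * (p + 2) * d m (p + 2) + (m + p + 1) * (m - p) * d m p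
      = (p + 1) * (2 * m + 1) * d m (p + 1) := by
  set F : ℕ → ℚ := fun k => (p + 1) * (p + 2) * k.choose (p + 2)
    + (m + p + 1) * (m - p) * k.choose p - (p + 1) * (2 * m + 1) * k.choose (p + 1)
  set G : ℕ → ℚ := fun k => (p + 1) * (2 * m + 1 - 2 * k) * weight m k * k.choose (p + 1)
  have hstep : ∀ k < m, weight m k * F k = G (k + 1) - G k := by
    intro k hk
    have hw := weight_succ hk
    have hc := congrArg (Nat.cast : ℕ → ℚ) (Nat.add_one_mul_choose_eq k p)
    have h3 := Nat.cast_choose_three_term (R := ℚ) k p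
    simp only [F, G]
    push_cast at hc ⊢
    linear_combination (2 * m - 2 * k - 1) * weight m (k + 1) * hc - (k.choose p : ℚ) * hw
      + weight m k * h3
  have htop : weight m m * F m = - G m := by
    linear_combination weight m m * Nat.cast_choose_three_term (R := ℚ) m p
  have hsum : ∑ k ∈ range (m + 1), weight m k * F k = 0 := by
    rw [sum_range_succ, sum_congr rfl fun k hk => hstep k (mem_range.1 hk), sum_range_sub, htop]
    simp [G]
  have hcombine : (p + 1) * (p + 2) * d m (p + 2) + (m + p + 1) * (m - p) * d m p
      - (p + 1) * (2 * m + 1) * d m (p + 1)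
      = (2 : ℚ) ^ (-(2 * (m : ℤ))) * ∑ k ∈ range (m + 1), weight m k * F k := by
    simp only [d_eq_sum_range, mul_sum, ← sum_add_distrib, ← sum_sub_distrib]
    exact sum_congr rfl fun k _ => by ring
  rw [← sub_eq_zero, hcombine, hsum, mul_zero]

lemma d_succ_le (m p : ℕ) : (p + 1) * d m (p + 1) ≤ (m - p) * d m p := by
  have h : (m - p) * d m p - (p + 1) * d m (p + 1)
      = (2 : ℚ) ^ (-(2 * (m : ℤ)))
        * ∑ k ∈ range (m + 1), weight m k * (m - k) * k.choose p := by
    simp only [d_eq_sum_range, mul_sum, ← sum_sub_distrib]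
    refine sum_congr rfl fun k _ => ?_
    linear_combination
      -(2 : ℚ) ^ (-(2 * (m : ℤ))) * weight m k * Nat.cast_choose_succ_mul (R := ℚ) k p
  have hnonneg : 0 ≤ (2 : ℚ) ^ (-(2 * (m : ℤ)))
      * ∑ k ∈ range (m + 1), weight m k * (m - k) * k.choose p := by
    refine mul_nonneg (by positivity) (sum_nonneg fun k hk => ?_)
    have hkm : (k : ℚ) ≤ m := by exact_mod_cast Nat.lt_succ_iff.1 (mem_range.1 hk)
    exact mul_nonneg (mul_nonneg (weight_nonneg m k) (by linarith)) (by positivity)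
  linarith

lemma d_log_concave {m p : ℕ} (hp : p < m) :
    (p + 2) * d m (p + 2) * d m p ≤ (p + 1) * d m (p + 1) ^ 2 := by
  have hrec := d_recurrence m p
  have hle : (p + 2) * d m (p + 2) ≤ (m - (p + 1)) * d m (p + 1) := by
    exact_mod_cast d_succ_le m (p + 1)
  have ha := d_nonneg m (p + 1)
  have hmp : (p : ℚ) + 1 ≤ m := by exact_mod_cast hp
  have key : (m + p + 1) * (m - p) * ((p + 1) * d m (p + 1) ^ 2 - (p + 2) * d m (p + 2) * d m p)
      = (p + 1) * ((m + p + 1) * d m (p + 1) - (p + 2) * d m (p + 2))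
        * ((m - p) * d m (p + 1) - (p + 2) * d m (p + 2)) := by
    linear_combination (-(p + 2) * d m (p + 2)) * hrec
  have hfactors : 0 ≤ (m + p + 1) * (m - p)
      * ((p + 1) * d m (p + 1) ^ 2 - (p + 2) * d m (p + 2) * d m p) := by
    rw [key]
    refine mul_nonneg (mul_nonneg (by positivity) ?_) ?_ <;> nlinarith
  have hpos : (0 : ℚ) < (m + p + 1) * (m - p) := by nlinarith
  linarith [(mul_nonneg_iff_of_pos_left hpos).1 hfactors]

lemma mul_d_self_le_two_mul_d {m i : ℕ} (hi : 0 < i) (him : i < m) :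
    (2 * m + 1) * d m m ≤ 2 * d m i := by
  obtain ⟨n, rfl⟩ : ∃ n, m = n + 1 := ⟨m - 1, by omega⟩
  have hw : weight (n + 1) (n + 1) = 2 * weight (n + 1) n := by
    have h := weight_succ (m := n + 1) (k := n) (by omega)
    push_cast at h
    refine mul_left_cancel₀ (show (n + 1 : ℚ) ≠ 0 by positivity) ?_
    linear_combination h
  have hlast : (n + 1 : ℚ) ≤ (n + 1).choose i := by
    exact_mod_cast Nat.le_choose_of_pos_of_lt hi him
  have hprev : (1 : ℚ) ≤ n.choose i := by exact_mod_cast Nat.choose_pos (by omega)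
  have hhead : 0 ≤ ∑ k ∈ range n, weight (n + 1) k * k.choose i :=
    sum_nonneg fun k _ => mul_nonneg (weight_nonneg _ k) (by positivity)
  have hgap : 0 ≤ 2 * ∑ k ∈ range n, weight (n + 1) k * k.choose i
      + 2 * weight (n + 1) n * ((n.choose i : ℚ) - 1)
      + 4 * weight (n + 1) n * ((n + 1).choose i - (n + 1 : ℚ)) := by
    have := weight_nonneg (n + 1) n
    have := mul_nonneg this (sub_nonneg.2 hprev)
    have := mul_nonneg this (sub_nonneg.2 hlast)
    nlinarith
  have hc : (0 : ℚ) ≤ 2 ^ (-(2 * ((n + 1 : ℕ) : ℤ))) := by positivity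
  rw [d_self, d_eq_sum_range, sum_range_succ, sum_range_succ, hw]
  push_cast at hc ⊢
  linarith [mul_nonneg hc hgap]

end Moll

open Moll in
theorem stmt15_general (m : ℕ) :
    (∀ i : ℕ, 1 ≤ i → i ≤ m - 1 →
      (i:ℚ)*((i:ℚ)+1) * ((d m i)^2 - d m (i+1) * d m (i-1))
        > (m:ℚ)*((m:ℚ)+1) * (d m m)^2)
    ∧ (m:ℚ)*((m:ℚ)+1) * (d m m)^2
        = (2:ℚ)^(-(2*(m:ℤ))) * m * (m+1) * (Nat.choose (2*m) m : ℚ)^2 := by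
  have hdm : d m m = (2 : ℚ) ^ (-(m : ℤ)) * (2 * m).choose m := by
    rw [d_self, weight_self, ← zpow_natCast, ← mul_assoc, ← zpow_add₀ two_ne_zero]
    congr 2; ring
  refine ⟨fun i hi him => ?_, ?_⟩
  · obtain ⟨p, rfl⟩ : ∃ p, i = p + 1 := ⟨i - 1, by omega⟩
    have hconc := d_log_concave (m := m) (p := p) (by omega)
    have hbound := mul_d_self_le_two_mul_d (m := m) (i := p + 1) (by omega) (by omega)
    have hpos : 0 < d m m := by
      rw [hdm]; exact mul_pos (by positivity) (by exact_mod_cast Nat.choose_pos (by omega))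
    rw [Nat.add_sub_cancel]
    push_cast
    calc (m : ℚ) * (m + 1) * d m m ^ 2 < ((2 * m + 1) * d m m) ^ 2 / 4 := by nlinarith
      _ ≤ d m (p + 1) ^ 2 := by nlinarith [pow_le_pow_left₀ (by positivity) hbound 2]
      _ ≤ (p + 1) * d m (p + 1) ^ 2 :=
        le_mul_of_one_le_left (sq_nonneg _) (by linarith [p.cast_nonneg (α := ℚ)])
      _ ≤ (p + 1) * (p + 1 + 1) * (d m (p + 1) ^ 2 - d m (p + 1 + 1) * d m p) := by nlinarith
  · rw [hdm, mul_pow, ← zpow_natCast, ← zpow_mul]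
    ring_nf

theorem stmt15 (m : ℕ) (hm : 2 ≤ m) :
    (∀ i : ℕ, 1 ≤ i → i ≤ m - 1 →
      (i:ℚ)*((i:ℚ)+1) * ((d m i)^2 - d m (i+1) * d m (i-1))
        > (m:ℚ)*((m:ℚ)+1) * (d m m)^2)
    ∧ (m:ℚ)*((m:ℚ)+1) * (d m m)^2
        = (2:ℚ)^(-(2*(m:ℤ))) * m * (m+1) * (Nat.choose (2*m) m : ℚ)^2 :=
  stmt15_general m
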